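/- arXiv:1309.2323 — 2 statements merged into one kernel-verified Lean document; each statement's English description precedes it below -/
import Mathlib

section
/- Let p be a prime, s ≥ 1 and n ≥ 1. Then the congruence ξ_{ns} ≡ (−1)^n ζ_s^{(p^{ns} − 1)/(p^s − 1)} holds in F_p[ξ_1, ξ_2, …] modulo the ideal generated by {ζ_j : j ≥ 1, j ≠ s}, where the exponent (p^{ns} − 1)/(p^s − 1) = 1 + p^s + p^{2s} + ⋯ + p^{(n−1)s}. -/
open MvPolynomial

/-- The conjugates `ζ_s ∈ F_p[ξ_1, ξ_2, …]` (with `ξ_r = X r`): `ζ_0 = 1` and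
`ζ_s = −(ζ_{s−1} ξ_1^{p^{s−1}} + ζ_{s−2} ξ_2^{p^{s−2}} + ⋯ + ζ_1 ξ_{s−1}^p + ξ_s)`. -/
noncomputable def zeta (p : ℕ) : ℕ → MvPolynomial ℕ (ZMod p)
  | 0 => 1
  | (s+1) => - ∑ i ∈ Finset.range (s+1), zeta p (s - i) * (X (i+1))^(p^(s-i))
  decreasing_by omega

/-- `ξ_m` with the convention `ξ_0 = 1`. -/
noncomputable def xiE (p m : ℕ) : MvPolynomial ℕ (ZMod p) :=
  if m = 0 then 1 else X m

/-- The ideal of `F_p[ξ_1, ξ_2, …]` generated by `{ζ_j : j ≥ 1, j ≠ s}`. -/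
noncomputable def zetaIdeal (p s : ℕ) : Ideal (MvPolynomial ℕ (ZMod p)) :=
  Ideal.span {x | ∃ j, 1 ≤ j ∧ j ≠ s ∧ x = zeta p j}

open Finset

/-!
With `ξ_0 = 1`, the recursion defining `ζ` says `∑_{j ≤ m} ζ_j ξ_{m-j}^{p^j} = 0` for `m ≥ 1`.
Modulo the ideal only the terms `j = 0` and `j = s` survive, so `ξ_m ≡ -ζ_s ξ_{m-s}^{p^s}`
for `m ≥ s`. Iterating from `ξ_0 = 1` and using `(-1)^{p^s} = -1` in characteristic `p` gives
`ξ_{ns} ≡ (-1)^n ζ_s^{1 + p^s + ⋯ + p^{(n-1)s}}`.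
-/

lemma zeta_zero (p : ℕ) : zeta p 0 = 1 := by
  rw [zeta]

lemma zeta_succ (p t : ℕ) :
    zeta p (t + 1) = -∑ j ∈ range (t + 1), zeta p j * X (t + 1 - j) ^ p ^ j := by
  rw [zeta, ← sum_range_reflect]
  congr 1
  refine sum_congr rfl fun i hi => ?_
  have hi : i < t + 1 := mem_range.mp hi
  rw [show t + 1 - 1 - i = t - i by omega, Nat.sub_sub_self (by omega),
    show t - i + 1 = t + 1 - i by omega]

lemma xiE_zero (p : ℕ) : xiE p 0 = 1 := if_pos rfl

lemma xiE_of_ne_zero {p m : ℕ} (hm : m ≠ 0) : xiE p m = X m := if_neg hm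

lemma sum_zeta_mul_xiE_pow_eq_zero (p : ℕ) {m : ℕ} (hm : m ≠ 0) :
    ∑ j ∈ range (m + 1), zeta p j * xiE p (m - j) ^ p ^ j = 0 := by
  obtain ⟨t, rfl⟩ := Nat.exists_eq_succ_of_ne_zero hm
  rw [sum_range_succ, Nat.sub_self, xiE_zero, one_pow, mul_one, zeta_succ, add_neg_eq_zero]
  refine sum_congr rfl fun j hj => ?_
  rw [xiE_of_ne_zero (by have := mem_range.mp hj; omega)]

section Quotient

variable {p s : ℕ}

local notation "π" => Ideal.Quotient.mk (zetaIdeal p s)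

lemma mk_zeta_eq_zero {j : ℕ} (hj : j ≠ 0) (hjs : j ≠ s) : π (zeta p j) = 0 :=
  Ideal.Quotient.eq_zero_iff_mem.mpr <|
    Ideal.subset_span ⟨j, Nat.one_le_iff_ne_zero.mpr hj, hjs, rfl⟩

lemma mk_xiE_eq_neg_mk_zeta_mul {m : ℕ} (hs : s ≠ 0) (hsm : s ≤ m) :
    π (xiE p m) = -(π (zeta p s) * π (xiE p (m - s)) ^ p ^ s) := by
  have hsum := congrArg π (sum_zeta_mul_xiE_pow_eq_zero p (m := m) (by omega))
  rw [map_sum, map_zero, sum_eq_add_of_mem 0 s (by simp) (mem_range.mpr (by omega)) hs.symm] at hsum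
  · simpa [zeta_zero, ← eq_neg_iff_add_eq_zero] using hsum
  · intro j _ ⟨hj0, hjs⟩
    rw [map_mul, mk_zeta_eq_zero hj0 hjs, zero_mul]

lemma mk_xiE_mul_eq (hp : p.Prime) (hs : s ≠ 0) (n : ℕ) :
    π (xiE p (n * s)) = (-1) ^ n * π (zeta p s) ^ ∑ i ∈ range n, (p ^ s) ^ i := by
  have := Fact.mk hp
  -- Frobenius in characteristic `p`, computed upstairs in `F_p[ξ_1, ξ_2, …]`.
  have hneg : (-1 : _ ⧸ zetaIdeal p s) ^ p ^ s = -1 := by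
    rw [← map_one π, ← map_neg, ← map_pow, neg_one_pow_char_pow]
  induction n with
  | zero => simp [xiE_zero]
  | succ n ih =>
    have hsub : (n + 1) * s - s = n * s := by rw [add_one_mul, Nat.add_sub_cancel]
    rw [mk_xiE_eq_neg_mk_zeta_mul hs (Nat.le_mul_of_pos_left s n.succ_pos), hsub, ih,
      geom_sum_succ, mul_pow, ← pow_mul, ← pow_mul, mul_comm n, pow_mul, hneg, pow_succ, pow_succ]
    ring

end Quotient

theorem xi_ns_congr_zeta_pow_general (p : ℕ) (hp : p.Prime) (s n : ℕ) (hs : 1 ≤ s) :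
    xiE p (n * s) -
        (-1 : MvPolynomial ℕ (ZMod p)) ^ n *
          (zeta p s) ^ ((p ^ (n * s) - 1) / (p ^ s - 1)) ∈ zetaIdeal p s := by
  have hq : 2 ≤ p ^ s := hp.two_le.trans (Nat.le_self_pow (by omega) p)
  rw [mul_comm n, pow_mul, ← Nat.geomSum_eq hq, ← Ideal.Quotient.eq, map_mul, map_pow,
    map_pow, map_neg, map_one, mul_comm s, mk_xiE_mul_eq hp (by omega)]

/-- For a prime `p`, `s ≥ 1` and `n ≥ 1`, the congruence
`ξ_{ns} ≡ (−1)^n ζ_s^{(p^{ns} − 1)/(p^s − 1)}` holds in `F_p[ξ_1, ξ_2, …]` modulo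
the ideal generated by `{ζ_j : j ≥ 1, j ≠ s}`. -/
theorem xi_ns_congr_zeta_pow (p : ℕ) (hp : p.Prime) (s n : ℕ) (hs : 1 ≤ s) (hn : 1 ≤ n) :
    xiE p (n * s) -
        (-1 : MvPolynomial ℕ (ZMod p)) ^ n *
          (zeta p s) ^ ((p ^ (n * s) - 1) / (p ^ s - 1)) ∈ zetaIdeal p s :=
  xi_ns_congr_zeta_pow_general p hp s n hs
end

section
/- Let p be a prime, s ≥ 1, and let m ≥ 1 be an integer that is not divisible by s. Then ξ_m lies in the ideal of F_p[ξ_1, ξ_2, …] generated by {ζ_j : j ≥ 1, j ≠ s}. -/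
/-!
Solving the recursion for `ζ_{n+1}` expresses `ξ_{n+1}` as `-ζ_{n+1}` minus the terms
`ζ_{n-i} ξ_{i+1}^{p^{n-i}}`. If `s ∤ n+1`, every one of these terms lies in the ideal: either
`n - i ≠ s`, and `ζ_{n-i}` is a generator, or `n - i = s`, and then `s ∤ i+1`, so `ξ_{i+1}`
lies in the ideal by strong induction on the index.
-/

open MvPolynomial

lemma zeta_mem_zetaIdeal {p s j : ℕ} (hj : 1 ≤ j) (hjs : j ≠ s) : zeta p j ∈ zetaIdeal p s :=
  Ideal.subset_span ⟨j, hj, hjs, rfl⟩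

lemma X_succ_eq_neg_zeta_sub (p n : ℕ) :
    (X (n + 1) : MvPolynomial ℕ (ZMod p)) =
      -zeta p (n + 1) - ∑ i ∈ Finset.range n, zeta p (n - i) * X (i + 1) ^ p ^ (n - i) := by
  rw [zeta, Finset.sum_range_succ, Nat.sub_self, zeta, pow_zero, pow_one, one_mul]
  ring

theorem X_mem_zetaIdeal {p s : ℕ} (hp : p ≠ 0) (m : ℕ) (hsm : ¬ s ∣ m) :
    X m ∈ zetaIdeal p s := by
  induction m using Nat.strong_induction_on with
  | _ m ih =>
    obtain ⟨n, rfl⟩ : ∃ n, m = n + 1 :=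
      Nat.exists_eq_succ_of_ne_zero (by rintro rfl; exact hsm (dvd_zero s))
    rw [X_succ_eq_neg_zeta_sub]
    refine sub_mem (neg_mem (zeta_mem_zetaIdeal le_add_self ?_)) (Ideal.sum_mem _ fun i hi => ?_)
    · rintro rfl
      exact hsm dvd_rfl
    rw [Finset.mem_range] at hi
    by_cases hnis : n - i = s
    · have hsi : ¬ s ∣ i + 1 := fun hdvd =>
        hsm (by rw [show n + 1 = i + 1 + s by omega]; exact dvd_add hdvd dvd_rfl)
      exact Ideal.mul_mem_left _ _
        (Ideal.pow_mem_of_mem _ (ih (i + 1) (by omega) hsi) _ (pow_pos (Nat.pos_of_ne_zero hp) _))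
    · exact Ideal.mul_mem_right _ _ (zeta_mem_zetaIdeal (by omega) hnis)

theorem xi_mem_zetaIdeal_general (p : ℕ) (hp : p.Prime) (s m : ℕ)
    (hns : ¬ s ∣ m) : X m ∈ zetaIdeal p s :=
  X_mem_zetaIdeal hp.ne_zero m hns

/-- For a prime `p`, `s ≥ 1`, and `m ≥ 1` not divisible by `s`, the variable `ξ_m`
lies in the ideal of `F_p[ξ_1, ξ_2, …]` generated by `{ζ_j : j ≥ 1, j ≠ s}`. -/
theorem xi_mem_zetaIdeal (p : ℕ) (hp : p.Prime) (s m : ℕ) (hs : 1 ≤ s) (hm : 1 ≤ m)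
    (hns : ¬ s ∣ m) : X m ∈ zetaIdeal p s :=
  xi_mem_zetaIdeal_general p hp s m hns
end
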